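/- arXiv:2507.20255 — 2 statements merged into one kernel-verified Lean document; each statement's English description precedes it below -/
import Mathlib

section
/- The function f(φ) = sin φ / (π·√(sin²φ − cos²b)), defined on (π/2 − b, π/2 + b) for inclination b ∈ (0, π/2], is a probability density function: it is nonnegative and its integral over (π/2 − b, π/2 + b) equals 1. -/
/-! `φ ↦ arcsin (-cos φ / sin b) / π` is an antiderivative of the density, because
`sin² φ - cos² b = sin² b - cos² φ`; it rises from `arcsin (-1) / π = -1/2` at `π/2 - b` to
`arcsin 1 / π = 1/2` at `π/2 + b`. The density is nonnegative, so this primitive also gives its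
integrability. -/

open Real MeasureTheory Set

theorem integral_Ioo_eq_sub_of_hasDerivAt_of_nonneg {f F : ℝ → ℝ} {a b : ℝ} (hab : a ≤ b)
    (hF : ContinuousOn F (Icc a b)) (hderiv : ∀ x ∈ Ioo a b, HasDerivAt F (f x) x)
    (hf : ∀ x ∈ Ioo a b, 0 ≤ f x) :
    ∫ x in Ioo a b, f x = F b - F a := by
  have hint : IntervalIntegrable f volume a b :=
    intervalIntegral.intervalIntegrable_deriv_of_nonneg (by rwa [uIcc_of_le hab])
      (by simpa only [min_eq_left hab, max_eq_right hab] using hderiv)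
      (by simpa only [min_eq_left hab, max_eq_right hab] using hf)
  rw [← integral_Ioc_eq_integral_Ioo, ← intervalIntegral.integral_of_le hab,
    intervalIntegral.integral_eq_sub_of_hasDerivAt_of_le hab hF hderiv hint]

theorem sin_sq_sub_cos_sq_comm (x y : ℝ) : sin x ^ 2 - cos y ^ 2 = sin y ^ 2 - cos x ^ 2 := by
  linarith [sin_sq_add_cos_sq x, sin_sq_add_cos_sq y]

theorem abs_cos_lt_sin_of_mem_Ioo {b φ : ℝ} (hb : b ≤ π / 2)
    (hφ : φ ∈ Ioo (π / 2 - b) (π / 2 + b)) : |cos φ| < sin b := by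
  obtain ⟨hφ₁, hφ₂⟩ := hφ
  rw [← sin_pi_div_two_sub, abs_lt]
  constructor
  · rw [← sin_neg]
    exact sin_lt_sin_of_lt_of_le_pi_div_two (by linarith) (by linarith) (by linarith)
  · exact sin_lt_sin_of_lt_of_le_pi_div_two (by linarith) hb (by linarith)

theorem hasDerivAt_arcsin_neg_cos_div {s φ : ℝ} (hφ : |cos φ| < s) :
    HasDerivAt (fun x => arcsin (-cos x / s)) (sin φ / √(s ^ 2 - cos φ ^ 2)) φ := by
  have hs : 0 < s := (abs_nonneg _).trans_lt hφ
  have hsq : 0 < s ^ 2 - cos φ ^ 2 := by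
    rw [sub_pos, ← sq_abs (cos φ)]
    exact pow_lt_pow_left₀ hφ (abs_nonneg _) two_ne_zero
  obtain ⟨hlo, hhi⟩ := abs_lt.mp hφ
  have hinner : HasDerivAt (fun x => -cos x / s) (sin φ / s) φ := by
    simpa using (hasDerivAt_cos φ).neg.div_const s
  have harcsin := hasDerivAt_arcsin (x := -cos φ / s)
    (by rw [ne_eq, div_eq_iff hs.ne']; linarith) (by rw [ne_eq, div_eq_iff hs.ne']; linarith)
  refine (harcsin.comp φ hinner).congr_deriv ?_
  have hone_sub : 1 - (-cos φ / s) ^ 2 = (s ^ 2 - cos φ ^ 2) / s ^ 2 := by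
    field_simp
  rw [hone_sub, sqrt_div hsq.le, sqrt_sq hs.le]
  have hsqrt : √(s ^ 2 - cos φ ^ 2) ≠ 0 := (sqrt_pos.mpr hsq).ne'
  field_simp

theorem polar_angle_density_is_pdf (b : ℝ) (hb : b ∈ Set.Ioc 0 (π / 2)) :
    (∀ φ ∈ Set.Ioo (π / 2 - b) (π / 2 + b),
        0 ≤ Real.sin φ / (π * Real.sqrt (Real.sin φ ^ 2 - Real.cos b ^ 2))) ∧
      ∫ φ in Set.Ioo (π / 2 - b) (π / 2 + b),
          Real.sin φ / (π * Real.sqrt (Real.sin φ ^ 2 - Real.cos b ^ 2)) = 1 := by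
  obtain ⟨hb₀, hb₂⟩ := hb
  have hsin_b : 0 < sin b := sin_pos_of_pos_of_lt_pi hb₀ (by linarith [pi_pos])
  have hnonneg : ∀ φ ∈ Ioo (π / 2 - b) (π / 2 + b),
      0 ≤ sin φ / (π * √(sin φ ^ 2 - cos b ^ 2)) := fun φ hφ =>
    div_nonneg (sin_nonneg_of_nonneg_of_le_pi (by linarith [hφ.1]) (by linarith [hφ.2]))
      (by positivity)
  refine ⟨hnonneg, ?_⟩
  have hderiv : ∀ φ ∈ Ioo (π / 2 - b) (π / 2 + b), HasDerivAt
      (fun x => arcsin (-cos x / sin b) / π) (sin φ / (π * √(sin φ ^ 2 - cos b ^ 2))) φ := by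
    intro φ hφ
    refine ((hasDerivAt_arcsin_neg_cos_div (abs_cos_lt_sin_of_mem_Ioo hb₂ hφ)).div_const π
      ).congr_deriv ?_
    rw [sin_sq_sub_cos_sq_comm, div_div, mul_comm]
  have hcont : Continuous fun x => arcsin (-cos x / sin b) / π := by fun_prop
  rw [integral_Ioo_eq_sub_of_hasDerivAt_of_nonneg (by linarith) hcont.continuousOn hderiv hnonneg,
    add_comm (π / 2) b, cos_add_pi_div_two, cos_pi_div_two_sub, neg_neg, neg_div,
    div_self hsin_b.ne', arcsin_neg, arcsin_one]
  field_simp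
  ring
end

section
/- For a satellite at position s = R·(sin φ·cos θ, sin φ·sin θ, cos φ) with velocity v = v·(cos β·θ̂ − sin β·φ̂), where θ̂ = (−sin θ, cos θ, 0) and φ̂ = (cos φ·cos θ, cos φ·sin θ, −sin φ), and a user at u = r·(0, sin φ_u, cos φ_u), the projection v·(s − u)/‖s − u‖ equals (vr/‖d‖)·[−cos β·cos θ·sin φ_u − sin β·(sin φ·cos φ_u − cos φ·sin θ·sin φ_u)], where ‖d‖ = √(r² + R² − 2rR·cos σ) and cos σ = cos φ·cos φ_u + sin φ·sin θ·sin φ_u. -/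
open Real

theorem doppler_shift_formula (r R v β θ φ φu : ℝ) (hr : 0 < r) (hrR : r < R) :
    let vx := v * (-Real.cos β * Real.sin θ - Real.sin β * Real.cos φ * Real.cos θ)
    let vy := v * (Real.cos β * Real.cos θ - Real.sin β * Real.cos φ * Real.sin θ)
    let vz := v * (Real.sin β * Real.sin φ)
    let dx := R * Real.sin φ * Real.cos θ
    let dy := R * Real.sin φ * Real.sin θ - r * Real.sin φu
    let dz := R * Real.cos φ - r * Real.cos φu
    let nd := Real.sqrt (r ^ 2 + R ^ 2 -
      2 * r * R * (Real.cos φ * Real.cos φu + Real.sin φ * Real.sin θ * Real.sin φu))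
    (vx * dx + vy * dy + vz * dz) / nd
      = (v * r / nd) * (-Real.cos β * Real.cos θ * Real.sin φu
          - Real.sin β * (Real.sin φ * Real.cos φu - Real.cos φ * Real.sin θ * Real.sin φu)) := by
  intro vx vy vz dx dy dz nd
  rw [div_mul_eq_mul_div]
  congr 1
  have h1 := Real.sin_sq_add_cos_sq θ
  have h2 := Real.sin_sq_add_cos_sq φ
  simp only [vx, vy, vz, dx, dy, dz]
  linear_combination (-v*R*Real.sin β*Real.sin φ*Real.cos φ)*h1
end
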